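/- For 0 = b₀ < b₁ < … < bₙ < b_{n+1} = 1 and a(x) = 1, the quadratic form of the stiffness matrix decomposes exactly as ξᵀAξ = Σⱼ₌₀ⁿ h_{j+1}(Σᵢ₌₀ʲ ξᵢ)², where hⱼ = bⱼ − b_{j−1} and A_{ij} = 1 − b_{max(i,j)−1}. -/

import Mathlib

/-! Since `b (n + 1) = 1`, each entry `1 - b (max i j)` telescopes to `∑_{k ≥ max i j} h_{k+1}`.
Hence `A = ∑ₖ h_{k+1} · 𝟙_{≤k} 𝟙_{≤k}ᵀ` is a weighted sum of rank-one matrices, whose quadratic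
forms are the squared partial sums `(∑_{i ≤ k} ξᵢ)²`. -/

open Matrix Finset

section

variable {ι R : Type*} [Fintype ι] [LinearOrder ι] [CommRing R]

theorem dotProduct_mulVec_eq_sum_mul_sq_partialSum (w : ι → R) (A : Matrix ι ι R)
    (hA : ∀ i j, A i j = ∑ k ∈ univ.filter (max i j ≤ ·), w k) (ξ : ι → R) :
    ξ ⬝ᵥ A *ᵥ ξ = ∑ k, w k * (∑ i ∈ univ.filter (· ≤ k), ξ i) ^ 2 := by
  calc ξ ⬝ᵥ A *ᵥ ξ
      = ∑ i, ∑ j, ∑ k, if i ≤ k ∧ j ≤ k then w k * (ξ i * ξ j) else 0 := by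
        simp only [dotProduct, mulVec, hA, sum_filter, max_le_iff, mul_sum, sum_mul]
        refine sum_congr rfl fun i _ => sum_congr rfl fun j _ => sum_congr rfl fun k _ => ?_
        split_ifs <;> ring
    _ = ∑ k, ∑ i, ∑ j, if i ≤ k ∧ j ≤ k then w k * (ξ i * ξ j) else 0 :=
        (sum_congr rfl fun _ _ => sum_comm).trans sum_comm
    _ = ∑ k, w k * (∑ i ∈ univ.filter (· ≤ k), ξ i) ^ 2 := by
        refine sum_congr rfl fun k _ => ?_
        rw [sq, sum_mul_sum, mul_sum, sum_filter]
        refine sum_congr rfl fun i _ => ?_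
        rw [sum_filter, mul_sum]
        split_ifs with hik <;> simp [hik]

end

theorem Fin.sum_filter_ge_sub (n : ℕ) {G : Type*} [AddCommGroup G] (b : ℕ → G) (m : Fin (n + 1)) :
    ∑ k ∈ univ.filter (fun k : Fin (n + 1) => m ≤ k), (b (k + 1) - b k) = b (n + 1) - b m := by
  simp only [sum_filter, Fin.le_iff_val_le_val]
  rw [Fin.sum_univ_eq_sum_range (fun k => if m ≤ k then b (k + 1) - b k else 0),
    ← sum_filter, ← sum_Ico_sub b m.is_lt.le]
  congr 1
  ext k
  simp only [mem_filter, mem_range, mem_Ico]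
  omega

theorem stmt19_general (n : ℕ) (b : ℕ → ℝ)
    (hbn : b (n + 1) = 1)
    (A : Matrix (Fin (n + 1)) (Fin (n + 1)) ℝ)
    (hA : ∀ i j : Fin (n + 1), A i j = 1 - b (max i.val j.val))
    (ξ : Fin (n + 1) → ℝ) :
    ξ ⬝ᵥ A.mulVec ξ = ∑ j : Fin (n + 1),
      (b (j.val + 1) - b j.val) *
        (∑ i ∈ Finset.univ.filter (fun i : Fin (n + 1) => i ≤ j), ξ i) ^ 2 := by
  refine dotProduct_mulVec_eq_sum_mul_sq_partialSum _ A (fun i j => ?_) ξ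
  rw [hA, Fin.sum_filter_ge_sub, hbn, Fin.coe_max]

/-- Exact decomposition of the stiffness quadratic form:
`ξᵀAξ = Σⱼ h_{j+1} (Σ_{i≤j} ξᵢ)²`. -/
theorem stmt19 (n : ℕ) (b : ℕ → ℝ)
    (hb0 : b 0 = 0) (hbn : b (n + 1) = 1) (hmono : ∀ i ≤ n, b i < b (i + 1))
    (A : Matrix (Fin (n + 1)) (Fin (n + 1)) ℝ)
    (hA : ∀ i j : Fin (n + 1), A i j = 1 - b (max i.val j.val))
    (ξ : Fin (n + 1) → ℝ) :
    ξ ⬝ᵥ A.mulVec ξ = ∑ j : Fin (n + 1),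
      (b (j.val + 1) - b j.val) *
        (∑ i ∈ Finset.univ.filter (fun i : Fin (n + 1) => i ≤ j), ξ i) ^ 2 :=
  stmt19_general n b hbn A hA ξ
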